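/- Let b ∈ ℂ with b ≠ 0. For b1, b2 ∈ ℂ let A2_{b1,b2} denote the ℂ-vector space with basis {L, W, x} equipped with the operations extending W(1,b) by x∘L = x, L∘x = b1·W + (1/2)x, x∘W = 0, W∘x = 0, x∘x = b2·W, [x,L] = −b·b1·W + (b/2)x, [x,W] = 0. Then: (i) A2_{b1,b2} is a Gel'fand-Dorfman bialgebra containing W(1,b) as a subalgebra; (ii) A2_{b1,b2} is equivalent to A2_{b1',b2'} if and only if there exist c2 ∈ ℂ and β ∈ ℂ* with b1 = β·b1' − c2/2 and b2 = β²·b2'; (iii) consequently, every A2_{b1,b2} is equivalent to A2_{0,0} or to A2_{0,1}, and A2_{0,0} is not equivalent to A2_{0,1}. -/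

import Mathlib

namespace GDExt

def IsNovikov {M : Type*} [AddCommGroup M] (mul : M → M → M) : Prop :=
  (∀ a b c, mul (mul a b) c - mul a (mul b c) = mul (mul b a) c - mul b (mul a c)) ∧
  ∀ a b c, mul (mul a b) c = mul (mul a c) b

def IsLieBracket {M : Type*} [AddCommGroup M] (br : M → M → M) : Prop :=
  (∀ a, br a a = 0) ∧ ∀ a b c, br a (br b c) = br (br a b) c + br b (br a c)

def IsGD {M : Type*} [AddCommGroup M] (mul br : M → M → M) : Prop :=
  IsNovikov mul ∧ IsLieBracket br ∧
  ∀ a b c, br a (mul b c) - br c (mul b a) + mul (br b a) c - mul (br b c) a - mul b (br a c) = 0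

variable {K : Type*} [Field K]
variable {A V : Type*} [AddCommGroup A] [Module K A] [AddCommGroup V] [Module K V]

/-- First component bilinear product of the unified product `A ♮ V`. -/
def uniMul (circ : A →ₗ[K] A →ₗ[K] A) (lA rA : A →ₗ[K] Module.End K V)
    (lV rV : V →ₗ[K] Module.End K A) (f : V →ₗ[K] V →ₗ[K] A)
    (st : V →ₗ[K] V →ₗ[K] V) : A × V → A × V → A × V :=
  fun p q =>
    (circ p.1 q.1 + lV p.2 q.1 + rV q.2 p.1 + f p.2 q.2,
     st p.2 q.2 + lA p.1 q.2 + rA q.1 p.2)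

/-- Bracket of the unified product `A ♮ V`. -/
def uniBr (brk : A →ₗ[K] A →ₗ[K] A) (tl : V →ₗ[K] A →ₗ[K] V) (tr : V →ₗ[K] A →ₗ[K] A)
    (hm : V →ₗ[K] V →ₗ[K] A) (vbr : V →ₗ[K] V →ₗ[K] V) : A × V → A × V → A × V :=
  fun p q =>
    (brk p.1 q.1 + tr p.2 q.1 - tr q.2 p.1 + hm p.2 q.2,
     vbr p.2 q.2 + tl p.2 q.1 - tl q.2 p.1)

end GDExt

namespace GDExt

/-- Equivalence of GD bialgebra structures on `ℂL ⊕ ℂW ⊕ ℂx` (coordinates `0 ↦ L`,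
`1 ↦ W`, `2 ↦ x`): a GD bialgebra isomorphism restricting to the identity on
`ℂL ⊕ ℂW`. -/
def GDequiv3 (m br m' br' : (Fin 3 → ℂ) → (Fin 3 → ℂ) → (Fin 3 → ℂ)) : Prop :=
  ∃ φ : (Fin 3 → ℂ) ≃ₗ[ℂ] (Fin 3 → ℂ),
    (∀ u v, φ (m u v) = m' (φ u) (φ v)) ∧
    (∀ u v, φ (br u v) = br' (φ u) (φ v)) ∧
    (∀ u : Fin 3 → ℂ, u 2 = 0 → φ u = u)

end GDExt

namespace GDExt

/-- The Novikov product of `A2_{b1,b2}` in the basis `L = e0, W = e1, x = e2`. -/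
noncomputable def A2mul (b1 b2 : ℂ) : (Fin 3 → ℂ) → (Fin 3 → ℂ) → (Fin 3 → ℂ) :=
  fun u v =>
    ![u 0 * v 0,
      b1 * (u 0 * v 2) + u 1 * v 0 + b2 * (u 2 * v 2),
      (1 / 2) * (u 0 * v 2) + u 2 * v 0]

/-- The Lie bracket of `A2_{b1,b2}` (for the parameter `b` of `W(1,b)`). -/
noncomputable def A2br (b b1 b2 : ℂ) : (Fin 3 → ℂ) → (Fin 3 → ℂ) → (Fin 3 → ℂ) :=
  fun u v =>
    ![0,
      -b * (u 0 * v 1 - u 1 * v 0) - b * b1 * (u 2 * v 0 - u 0 * v 2),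
      (b / 2) * (u 2 * v 0 - u 0 * v 2)]

/-! An equivalence fixes `L` and `W`, so it is determined by `φ x = c₁ L + c₂ W + β x` with
`β ≠ 0`. Applying `φ` to `L ∘ x = b₁ W + x / 2` forces `c₁ = 0` and `b₁ = β b₁' - c₂ / 2`, and
applying it to `x ∘ x = b₂ W` gives `b₂ = β² b₂'`; conversely every such `φ` is an equivalence.
Over `ℂ`, rescaling `x` by a square root of `b₂` then brings `b₂` to `0` or `1`, and `β² ≠ 0`
keeps `A2_{0,0}` and `A2_{0,1}` apart. -/

section Structure

variable (b b1 b2 : ℂ)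

theorem isNovikov_A2mul : IsNovikov (A2mul b1 b2) := by
  constructor <;>
  · intro u v w; funext i; fin_cases i <;> simp [A2mul] <;> ring

theorem isLieBracket_A2br : IsLieBracket (A2br b b1 b2) := by
  constructor
  · intro u; funext i; fin_cases i <;> simp [A2br, mul_comm]
  · intro u v w; funext i; fin_cases i <;> simp [A2br] <;> ring

theorem isGD_A2 : IsGD (A2mul b1 b2) (A2br b b1 b2) := by
  refine ⟨isNovikov_A2mul b1 b2, isLieBracket_A2br b b1 b2, ?_⟩
  intro u v w; funext i; fin_cases i <;> simp [A2br, A2mul] <;> ring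

theorem A2mul_of_coord_two_eq_zero {u v : Fin 3 → ℂ} (hu : u 2 = 0) (hv : v 2 = 0) :
    A2mul b1 b2 u v = ![u 0 * v 0, u 1 * v 0, 0] := by
  funext i; fin_cases i <;> simp [A2mul, hu, hv]

theorem A2br_of_coord_two_eq_zero {u v : Fin 3 → ℂ} (hu : u 2 = 0) (hv : v 2 = 0) :
    A2br b b1 b2 u v = ![0, -b * (u 0 * v 1 - u 1 * v 0), 0] := by
  funext i; fin_cases i <;> simp [A2br, hu, hv]

end Structure

noncomputable def shearScale (c2 β : ℂ) (hβ : β ≠ 0) : (Fin 3 → ℂ) ≃ₗ[ℂ] (Fin 3 → ℂ) where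
  toFun u := ![u 0, u 1 + c2 * u 2, β * u 2]
  invFun u := ![u 0, u 1 - c2 / β * u 2, u 2 / β]
  map_add' u v := by funext i; fin_cases i <;> simp [mul_add, add_add_add_comm]
  map_smul' r u := by funext i; fin_cases i <;> simp [mul_add, mul_left_comm]
  left_inv u := by funext i; fin_cases i <;> simp [hβ] <;> field_simp <;> ring
  right_inv u := by funext i; fin_cases i <;> simp <;> field_simp <;> ring

theorem gdEquiv3_A2_of_eq {b b1 b2 b1' b2' c2 β : ℂ} (hβ : β ≠ 0)
    (h1 : b1 = β * b1' - c2 / 2) (h2 : b2 = β ^ 2 * b2') :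
    GDequiv3 (A2mul b1 b2) (A2br b b1 b2) (A2mul b1' b2') (A2br b b1' b2') := by
  refine ⟨shearScale c2 β hβ, ?_, ?_, ?_⟩
  · intro u v; funext i; fin_cases i <;> simp [shearScale, A2mul, h1, h2] <;> ring
  · intro u v; funext i; fin_cases i <;> simp [shearScale, A2br, h1] <;> ring
  · intro u hu; funext i; fin_cases i <;> simp [shearScale, hu]

theorem exists_eq_of_gdEquiv3_A2 {b b1 b2 b1' b2' : ℂ}
    (h : GDequiv3 (A2mul b1 b2) (A2br b b1 b2) (A2mul b1' b2') (A2br b b1' b2')) :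
    ∃ c2 β : ℂ, β ≠ 0 ∧ b1 = β * b1' - c2 / 2 ∧ b2 = β ^ 2 * b2' := by
  obtain ⟨φ, hmul, -, hfix⟩ := h
  set w := φ ![0, 0, 1] with hw
  have hw2 : w 2 ≠ 0 := by
    intro hw2
    have : (![0, 0, 1] : Fin 3 → ℂ) = w := φ.injective (by rw [hfix w hw2])
    simpa [hw2] using congrFun this 2
  -- `φ (L ∘ x) = L ∘ φ x`
  have hLx := hmul ![1, 0, 0] ![0, 0, 1]
  have hLx_eq : A2mul b1 b2 ![1, 0, 0] ![0, 0, 1] = ![0, b1, 0] + (1 / 2 : ℂ) • ![0, 0, 1] := by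
    funext i; fin_cases i <;> simp [A2mul]
  rw [hLx_eq, map_add, map_smul, hfix ![0, b1, 0] (by simp), hfix ![1, 0, 0] (by simp),
    ← hw] at hLx
  have hLx0 := congrFun hLx 0
  have hLx1 := congrFun hLx 1
  simp only [A2mul, Pi.add_apply, Pi.smul_apply, smul_eq_mul, Matrix.cons_val_zero,
    Matrix.cons_val_one, Matrix.cons_val, Fin.isValue] at hLx0 hLx1
  have hw0 : w 0 = 0 := by linear_combination -2 * hLx0
  -- `φ (x ∘ x) = φ x ∘ φ x`
  have hxx := hmul ![0, 0, 1] ![0, 0, 1]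
  have hxx_eq : A2mul b1 b2 ![0, 0, 1] ![0, 0, 1] = ![0, b2, 0] := by
    funext i; fin_cases i <;> simp [A2mul]
  rw [hxx_eq, hfix ![0, b2, 0] (by simp), ← hw] at hxx
  have hxx1 := congrFun hxx 1
  simp only [A2mul, Matrix.cons_val_zero, Matrix.cons_val_one, Fin.isValue] at hxx1
  exact ⟨w 1, w 2, hw2, by linear_combination hLx1,
    by linear_combination hxx1 + (b1' * w 2 + w 1) * hw0⟩

theorem gdEquiv3_A2_iff (b b1 b2 b1' b2' : ℂ) :
    GDequiv3 (A2mul b1 b2) (A2br b b1 b2) (A2mul b1' b2') (A2br b b1' b2') ↔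
      ∃ c2 β : ℂ, β ≠ 0 ∧ b1 = β * b1' - c2 / 2 ∧ b2 = β ^ 2 * b2' :=
  ⟨exists_eq_of_gdEquiv3_A2, fun ⟨_, _, hβ, h1, h2⟩ => gdEquiv3_A2_of_eq hβ h1 h2⟩

theorem gdEquiv3_A2_zero_zero_or_zero_one (b b1 b2 : ℂ) :
    GDequiv3 (A2mul b1 b2) (A2br b b1 b2) (A2mul 0 0) (A2br b 0 0) ∨
      GDequiv3 (A2mul b1 b2) (A2br b b1 b2) (A2mul 0 1) (A2br b 0 1) := by
  by_cases hb2 : b2 = 0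
  · exact .inl (gdEquiv3_A2_of_eq (c2 := -2 * b1) one_ne_zero (by ring) (by simp [hb2]))
  · obtain ⟨β, hβ⟩ := IsAlgClosed.exists_pow_nat_eq b2 two_pos
    have hβ0 : β ≠ 0 := by rintro rfl; simp [eq_comm, hb2] at hβ
    exact .inr (gdEquiv3_A2_of_eq (c2 := -2 * b1) hβ0 (by ring) (by simp [hβ]))

theorem not_gdEquiv3_A2_zero_zero_zero_one (b : ℂ) :
    ¬ GDequiv3 (A2mul 0 0) (A2br b 0 0) (A2mul 0 1) (A2br b 0 1) := by
  intro h
  obtain ⟨_, β, hβ, -, h2⟩ := exists_eq_of_gdEquiv3_A2 h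
  exact hβ (pow_eq_zero_iff two_ne_zero |>.mp (by simpa using h2.symm))

theorem caseA2_general (b : ℂ) :
    (∀ b1 b2 : ℂ, IsGD (A2mul b1 b2) (A2br b b1 b2) ∧
      ∀ u v : Fin 3 → ℂ, u 2 = 0 → v 2 = 0 →
        A2mul b1 b2 u v = ![u 0 * v 0, u 1 * v 0, 0] ∧
        A2br b b1 b2 u v = ![0, -b * (u 0 * v 1 - u 1 * v 0), 0]) ∧
    (∀ b1 b2 b1' b2' : ℂ,
      GDequiv3 (A2mul b1 b2) (A2br b b1 b2) (A2mul b1' b2') (A2br b b1' b2') ↔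
        ∃ c2 β : ℂ, β ≠ 0 ∧ b1 = β * b1' - c2 / 2 ∧ b2 = β ^ 2 * b2') ∧
    (∀ b1 b2 : ℂ,
      GDequiv3 (A2mul b1 b2) (A2br b b1 b2) (A2mul 0 0) (A2br b 0 0) ∨
      GDequiv3 (A2mul b1 b2) (A2br b b1 b2) (A2mul 0 1) (A2br b 0 1)) ∧
    ¬ GDequiv3 (A2mul 0 0) (A2br b 0 0) (A2mul 0 1) (A2br b 0 1) :=
  ⟨fun b1 b2 => ⟨isGD_A2 b b1 b2, fun _ _ hu hv =>
      ⟨A2mul_of_coord_two_eq_zero b1 b2 hu hv, A2br_of_coord_two_eq_zero b b1 b2 hu hv⟩⟩,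
    gdEquiv3_A2_iff b, gdEquiv3_A2_zero_zero_or_zero_one b,
    not_gdEquiv3_A2_zero_zero_zero_one b⟩

/-- Case A2. -/
theorem caseA2 (b : ℂ) (hb : b ≠ 0) :
    (∀ b1 b2 : ℂ, IsGD (A2mul b1 b2) (A2br b b1 b2) ∧
      ∀ u v : Fin 3 → ℂ, u 2 = 0 → v 2 = 0 →
        A2mul b1 b2 u v = ![u 0 * v 0, u 1 * v 0, 0] ∧
        A2br b b1 b2 u v = ![0, -b * (u 0 * v 1 - u 1 * v 0), 0]) ∧
    (∀ b1 b2 b1' b2' : ℂ,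
      GDequiv3 (A2mul b1 b2) (A2br b b1 b2) (A2mul b1' b2') (A2br b b1' b2') ↔
        ∃ c2 β : ℂ, β ≠ 0 ∧ b1 = β * b1' - c2 / 2 ∧ b2 = β ^ 2 * b2') ∧
    (∀ b1 b2 : ℂ,
      GDequiv3 (A2mul b1 b2) (A2br b b1 b2) (A2mul 0 0) (A2br b 0 0) ∨
      GDequiv3 (A2mul b1 b2) (A2br b b1 b2) (A2mul 0 1) (A2br b 0 1)) ∧
    ¬ GDequiv3 (A2mul 0 0) (A2br b 0 0) (A2mul 0 1) (A2br b 0 1) :=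
  caseA2_general b

end GDExt
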